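/- For every even integer m > 1, the set CBFS₂(2m+2) is a non-expandable cross-bifix-free set on BF₂(2m+2); that is, for every bifix-free binary word γ of length 2m+2 with γ ∉ CBFS₂(2m+2), there exists ω ∈ CBFS₂(2m+2) such that some nonempty proper prefix of γ is a suffix of ω, or some nonempty proper prefix of ω is a suffix of γ. -/

import Mathlib

/-- A binary word (as a list of Booleans, `true` = 1, `false` = 0) is a Dyck word
if it has as many 1s as 0s and every prefix has at least as many 1s as 0s. -/
def IsDyck (w : List Bool) : Prop :=
  w.count true = w.count false ∧
  ∀ p : List Bool, p <+: w → p.count false ≤ p.count true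

/-- `DyckLen w n` : `w` is a Dyck word of length `n`. -/
def DyckLen (w : List Bool) (n : ℕ) : Prop := IsDyck w ∧ w.length = n

/-- A word is bifix-free if no nonempty proper prefix of it is also a suffix of it. -/
def BifixFree {A : Type*} (w : List A) : Prop :=
  ∀ p : List A, p ≠ [] → p <+: w → p ≠ w → ¬ p <:+ w

/-- Two (distinct, same-length) words are cross-bifix-free if no nonempty proper
prefix of either one is a suffix of the other. -/
def CrossBifixFree {A : Type*} (w w' : List A) : Prop :=
  (∀ p : List A, p ≠ [] → p <+: w → p ≠ w → ¬ p <:+ w') ∧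
  (∀ p : List A, p ≠ [] → p <+: w' → p ≠ w' → ¬ p <:+ w)

/-- The set of bifix-free binary words of length `n`. -/
def BF (n : ℕ) : Set (List Bool) := {w | w.length = n ∧ BifixFree w}

/-- `CBFS₂(2m+1)` : words `1·α` where `α` is a Dyck word of length `2m`. -/
def CBFSodd (m : ℕ) : Set (List Bool) :=
  {w | ∃ α : List Bool, DyckLen α (2 * m) ∧ w = true :: α}

/-- `CBFS₂(2m+2)` for even `m > 1` : words `α·1·β·0` with `α` a Dyck word of length `2i`,
`β` a Dyck word of length `2(m-i)`, `0 ≤ i ≤ m/2`. -/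
def CBFSevenE (m : ℕ) : Set (List Bool) :=
  {w | ∃ (i : ℕ) (α β : List Bool), i ≤ m / 2 ∧ DyckLen α (2 * i) ∧
    DyckLen β (2 * (m - i)) ∧ w = α ++ true :: β ++ [false]}

/-- `CBFS₂(2m+2)` for odd `m ≥ 1` : words `α·1·β·0` with `α` a Dyck word of length `2i`,
`β` a Dyck word of length `2(m-i)`, `0 ≤ i ≤ (m+1)/2`, excluding the words
`1·α'·0·1·β'·0` with `α'`, `β'` Dyck words of length `m-1`. -/
def CBFSevenO (m : ℕ) : Set (List Bool) :=
  {w | ∃ (i : ℕ) (α β : List Bool), i ≤ (m + 1) / 2 ∧ DyckLen α (2 * i) ∧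
    DyckLen β (2 * (m - i)) ∧ w = α ++ true :: β ++ [false]} \
  {w | ∃ α' β' : List Bool, DyckLen α' (m - 1) ∧ DyckLen β' (m - 1) ∧
    w = true :: α' ++ false :: true :: β' ++ [false]}

/-!
Read a binary word as a lattice path (`1` up, `0` down). A word `γ` of length `2m + 2` outside
`CBFS₂(2m+2)` overlaps a member of `CBFS₂(2m+2)`, according to the shape of its path, where `F`
always denotes a Dyck word of the length that makes the lengths add up:
* if the path goes below `0`, its first descent is a prefix `D·0` with `D` a Dyck word, and
  `D·0` is a suffix of `1·F·D·0`;
* if the path stays nonnegative and ends at height `h > 0`, the last step from `h - 1` to `h`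
  splits `γ = A·1·B` with `B` a Dyck word, and the suffix `1·B` of `γ` is a prefix of `1·B·F·0`;
* if `γ` is a Dyck word, the last return to `0` before the end splits `γ = A·1·B·0` with `A`, `B`
  Dyck words; as `γ ∉ CBFS₂(2m+2)`, `|A| > m`, and since `m` is even the Dyck suffix `C = 1·B·0`
  has length at most `m`, so it is the `α`-part of `C·1·F·0`.
-/

namespace BinaryWord

def height (w : List Bool) : ℤ := w.count true - w.count false

@[simp] lemma height_nil : height [] = 0 := rfl

@[simp] lemma height_cons_true (w : List Bool) : height (true :: w) = height w + 1 := by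
  simp [height]; ring

@[simp] lemma height_cons_false (w : List Bool) : height (false :: w) = height w - 1 := by
  simp [height]; ring

@[simp] lemma height_append (u v : List Bool) : height (u ++ v) = height u + height v := by
  simp [height, List.count_append]; ring

@[simp] lemma height_reverse (w : List Bool) : height w.reverse = height w := by
  simp [height]

@[simp] lemma height_map_not (w : List Bool) : height (w.map not) = -height w := by
  have h (b : Bool) : (w.map not).count (!b) = w.count b :=
    List.count_map_of_injective _ _ Bool.not_injective b
  simp only [height, ← h true, ← h false, Bool.not_true, Bool.not_false]
  ring

end BinaryWord

open BinaryWord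

lemma isDyck_iff {w : List Bool} :
    IsDyck w ↔ height w = 0 ∧ ∀ p, p <+: w → 0 ≤ height p := by
  simp only [IsDyck, height, sub_eq_zero, sub_nonneg]
  norm_cast

lemma isDyck_iff_take {w : List Bool} :
    IsDyck w ↔ height w = 0 ∧ ∀ n, 0 ≤ height (w.take n) := by
  rw [isDyck_iff]
  refine and_congr_right fun _ => ⟨fun h n => h _ (w.take_prefix n), fun h p hp => ?_⟩
  rw [List.prefix_iff_eq_take.mp hp]
  exact h _

lemma isDyck_nil : IsDyck [] :=
  isDyck_iff.mpr ⟨rfl, fun p hp => by simp [List.prefix_nil.mp hp]⟩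

lemma IsDyck.even_length {w : List Bool} (h : IsDyck w) : Even w.length := by
  rw [← List.count_true_add_count_false, h.1]
  exact Even.add_self _

lemma IsDyck.append {u v : List Bool} (hu : IsDyck u) (hv : IsDyck v) : IsDyck (u ++ v) := by
  rw [isDyck_iff_take] at *
  refine ⟨by simp [hu.1, hv.1], fun n => ?_⟩
  rw [List.take_append, height_append]
  exact add_nonneg (hu.2 n) (hv.2 _)

lemma IsDyck.of_prefix {p w : List Bool} (hw : IsDyck w) (hp : p <+: w) (h : height p = 0) :
    IsDyck p :=
  isDyck_iff.mpr ⟨h, fun q hq => (isDyck_iff.mp hw).2 q (hq.trans hp)⟩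

lemma IsDyck.of_append_right {u v : List Bool} (h : IsDyck (u ++ v)) (hu : height u = 0) :
    IsDyck v := by
  rw [isDyck_iff] at *
  refine ⟨by simpa [hu] using h.1, fun p hp => ?_⟩
  simpa [hu] using h.2 (u ++ p) ((List.prefix_append_right_inj u).mpr hp)

lemma IsDyck.reverse_map_not {w : List Bool} (h : IsDyck w) : IsDyck (w.map not).reverse := by
  rw [isDyck_iff] at *
  refine ⟨by simp [h.1], fun p hp => ?_⟩
  obtain ⟨s, hs⟩ := hp
  have hw : w = (s.map not).reverse ++ (p.map not).reverse := by
    have := congrArg (fun l => (l.map not).reverse) hs.symm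
    simpa [List.map_reverse, Function.comp_def] using this
  have := h.2 _ (hw ▸ List.prefix_append _ _)
  have h0 := h.1
  rw [hw] at h0
  simp only [height_append, height_reverse, height_map_not] at this h0
  linarith

lemma exists_dyckLen (n : ℕ) : ∃ w, DyckLen w (2 * n) := by
  induction n with
  | zero => exact ⟨[], isDyck_nil, rfl⟩
  | succ n ih =>
    obtain ⟨w, hw, hlen⟩ := ih
    have h10 : IsDyck [true, false] := by
      refine isDyck_iff_take.mpr ⟨rfl, fun n => ?_⟩
      rcases n with _ | _ | n <;> simp
    exact ⟨[true, false] ++ w, IsDyck.append h10 hw, by simp [hlen]; ring⟩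

lemma exists_isDyck_append_false {w : List Bool} (h : ∃ p, p <+: w ∧ height p < 0) :
    ∃ D r, IsDyck D ∧ w = D ++ false :: r := by
  classical
  have hex : ∃ n, height (w.take n) < 0 := by
    obtain ⟨p, hp, hneg⟩ := h
    exact ⟨p.length, by rwa [← List.prefix_iff_eq_take.mp hp]⟩
  set n := Nat.find hex
  have hn : height (w.take n) < 0 := Nat.find_spec hex
  obtain ⟨D, b, hDb⟩ : ∃ D b, w.take n = D ++ [b] := by
    rcases List.eq_nil_or_concat' (w.take n) with h0 | h
    · simp [h0] at hn
    · exact h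
  have hDpre : ∀ q, q <+: D → 0 ≤ height q := fun q hq => by
    have hqw : q <+: w := hq.trans ((List.prefix_append D [b]).trans (hDb ▸ w.take_prefix n))
    rw [List.prefix_iff_eq_take.mp hqw]
    refine not_lt.mp (Nat.find_min hex ?_)
    have := congrArg List.length hDb
    simp only [List.length_take, List.length_append, List.length_singleton] at this
    have := hq.length_le
    omega
  have hD0 := hDpre D (List.prefix_refl D)
  rw [hDb] at hn
  cases b
  · refine ⟨D, w.drop n, isDyck_iff.mpr ⟨?_, hDpre⟩, ?_⟩
    · simp only [height_append, height_cons_false, height_nil] at hn; omega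
    · simpa [hDb] using (List.take_append_drop n w).symm
  · simp only [height_append, height_cons_true, height_nil] at hn; omega

lemma exists_append_true_isDyck {w : List Bool} (h : 0 < height w) :
    ∃ A B, IsDyck B ∧ w = A ++ true :: B := by
  obtain ⟨D, r, hD, hw⟩ :=
    exists_isDyck_append_false ⟨(w.map not).reverse, List.prefix_refl _, by simpa using h⟩
  refine ⟨(r.map not).reverse, (D.map not).reverse, hD.reverse_map_not, ?_⟩
  have := congrArg (fun l => (l.map not).reverse) hw
  simpa [List.map_reverse, Function.comp_def] using this

lemma IsDyck.exists_eq_append_true_append_false {w : List Bool} (h : IsDyck w) (hw : w ≠ []) :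
    ∃ A B, IsDyck A ∧ IsDyck B ∧ w = A ++ true :: B ++ [false] := by
  obtain ⟨v, b, rfl⟩ := (List.eq_nil_or_concat' w).resolve_left hw
  have h0 := (isDyck_iff.mp h).1
  have hv := (isDyck_iff.mp h).2 v (List.prefix_append v [b])
  cases b
  · simp only [height_append, height_cons_false, height_nil] at h0
    obtain ⟨A, B, hB, rfl⟩ := exists_append_true_isDyck (show 0 < height v by omega)
    have hA : height A = 0 := by
      simp only [height_append, height_cons_true, (isDyck_iff.mp hB).1] at h0
      omega
    exact ⟨A, B, h.of_prefix (by simp [List.prefix_append]) hA, hB, rfl⟩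
  · simp only [height_append, height_cons_true, height_nil] at h0; omega

lemma append_true_append_false_mem_CBFSevenE {m : ℕ} {α β : List Bool} (hα : IsDyck α)
    (hβ : IsDyck β) (hlen : α.length + β.length = 2 * m) (hαm : α.length ≤ m) :
    α ++ true :: β ++ [false] ∈ CBFSevenE m := by
  obtain ⟨i, hi⟩ := hα.even_length
  exact ⟨i, α, β, by omega, ⟨hα, by omega⟩, ⟨hβ, by omega⟩, rfl⟩

lemma exists_not_crossBifixFree_of_isDyck_append_false {m : ℕ} {D r : List Bool}
    (hD : IsDyck D) (hlen : (D ++ false :: r).length = 2 * m + 2) :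
    ∃ ω ∈ CBFSevenE m, ¬ CrossBifixFree (D ++ false :: r) ω := by
  obtain ⟨e, he⟩ := hD.even_length
  simp only [List.length_append, List.length_cons] at hlen
  obtain ⟨F, hF, hFlen⟩ := exists_dyckLen (m - e)
  refine ⟨[] ++ true :: (F ++ D) ++ [false],
    append_true_append_false_mem_CBFSevenE isDyck_nil (hF.append hD) (by simp; omega) (by simp),
    fun h => h.1 (D ++ [false]) (by simp) (by simp) (fun hr => ?_) ⟨true :: F, by simp⟩⟩
  -- `D ++ [false]` has odd length
  have := congrArg List.length hr
  simp only [List.length_append, List.length_cons, List.length_nil] at this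
  omega

lemma exists_not_crossBifixFree_of_append_true_isDyck {m : ℕ} {A B : List Bool}
    (hB : IsDyck B) (hlen : (A ++ true :: B).length = 2 * m + 2) :
    ∃ ω ∈ CBFSevenE m, ¬ CrossBifixFree (A ++ true :: B) ω := by
  obtain ⟨e, he⟩ := hB.even_length
  simp only [List.length_append, List.length_cons] at hlen
  obtain ⟨F, hF, hFlen⟩ := exists_dyckLen (m - e)
  refine ⟨[] ++ true :: (B ++ F) ++ [false],
    append_true_append_false_mem_CBFSevenE isDyck_nil (hB.append hF) (by simp; omega) (by simp),
    fun h => h.2 (true :: B) (by simp) (by simp) (fun hr => by simpa using congrArg List.length hr)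
      (List.suffix_append A _)⟩

lemma exists_not_crossBifixFree_of_isDyck {m : ℕ} {γ : List Bool} (hm : Even m)
    (hγ : IsDyck γ) (hlen : γ.length = 2 * m + 2) (hγn : γ ∉ CBFSevenE m) :
    ∃ ω ∈ CBFSevenE m, ¬ CrossBifixFree γ ω := by
  obtain ⟨A, B, hA, hB, rfl⟩ :=
    hγ.exists_eq_append_true_append_false (by rintro rfl; simp at hlen)
  simp only [List.length_append, List.length_cons, List.length_nil] at hlen
  by_cases hAm : A.length ≤ m
  · exact absurd (append_true_append_false_mem_CBFSevenE hA hB (by omega) hAm) hγn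
  -- `A` and `m` are even, so `A.length ≥ m + 2` and the Dyck suffix `C` has length at most `m`.
  set C := true :: B ++ [false]
  have hC : IsDyck C := by
    refine IsDyck.of_append_right (u := A) ?_ (isDyck_iff.mp hA).1
    simpa [C] using hγ
  obtain ⟨a, ha⟩ := hA.even_length
  obtain ⟨k, hk⟩ := hm
  obtain ⟨F, hF, hFlen⟩ := exists_dyckLen (a - 1)
  refine ⟨C ++ true :: F ++ [false],
    append_true_append_false_mem_CBFSevenE hC hF (by simp [C]; omega) (by simp [C]; omega),
    fun h => h.2 C (by simp [C]) (by simp) (fun hr => by simpa [C] using congrArg List.length hr)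
      ⟨A, by simp [C]⟩⟩

theorem CBFSevenE_nonexpandable_general (m : ℕ) (hme : Even m) (γ : List Bool)
    (hγ : γ ∈ BF (2 * m + 2)) (hγn : γ ∉ CBFSevenE m) :
    ∃ ω ∈ CBFSevenE m,
      (∃ p : List Bool, p ≠ [] ∧ p <+: γ ∧ p ≠ γ ∧ p <:+ ω) ∨
      (∃ p : List Bool, p ≠ [] ∧ p <+: ω ∧ p ≠ ω ∧ p <:+ γ) := by
  suffices ∃ ω ∈ CBFSevenE m, ¬ CrossBifixFree γ ω by
    obtain ⟨ω, hω, h⟩ := this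
    simp only [CrossBifixFree, not_and_or, not_forall, not_not, exists_prop] at h
    exact ⟨ω, hω, h⟩
  have hlen : γ.length = 2 * m + 2 := hγ.1
  by_cases hneg : ∃ p, p <+: γ ∧ height p < 0
  · obtain ⟨D, r, hD, rfl⟩ := exists_isDyck_append_false hneg
    exact exists_not_crossBifixFree_of_isDyck_append_false hD hlen
  push Not at hneg
  rcases (hneg γ (List.prefix_refl γ)).lt_or_eq with hpos | hzero
  · obtain ⟨A, B, hB, rfl⟩ := exists_append_true_isDyck hpos
    exact exists_not_crossBifixFree_of_append_true_isDyck hB hlen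
  · exact exists_not_crossBifixFree_of_isDyck hme (isDyck_iff.mpr ⟨hzero.symm, hneg⟩) hlen hγn

/-- For every even `m > 1`, `CBFS₂(2m+2)` is a non-expandable
cross-bifix-free set on `BF₂(2m+2)`. -/
theorem CBFSevenE_nonexpandable (m : ℕ) (hm : 1 < m) (hme : Even m) (γ : List Bool)
    (hγ : γ ∈ BF (2 * m + 2)) (hγn : γ ∉ CBFSevenE m) :
    ∃ ω ∈ CBFSevenE m,
      (∃ p : List Bool, p ≠ [] ∧ p <+: γ ∧ p ≠ γ ∧ p <:+ ω) ∨
      (∃ p : List Bool, p ≠ [] ∧ p <+: ω ∧ p ≠ ω ∧ p <:+ γ) :=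
  CBFSevenE_nonexpandable_general m hme γ hγ hγn
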